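/- Let p be an odd prime. The holomorph Hol(C_p × D_{2p}) has exactly p² − p semiregular subgroups of order p², and each of these subgroups is isomorphic to C_p × C_p. -/

import Mathlib

open Equiv

/-- The left regular representation of a group `N` in `Equiv.Perm N`. -/
def leftReg (N : Type*) [Group N] : N →* Equiv.Perm N :=
  MulAction.toPermHom N N

/-- The holomorph of `N`: the normalizer of the image of the left regular
representation inside the symmetric group on `N`. -/
def Hol (N : Type*) [Group N] : Subgroup (Equiv.Perm N) :=
  Subgroup.normalizer (MonoidHom.range (leftReg N))

/-- A subgroup of `Equiv.Perm N` is semiregular if every non-identity element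
has no fixed point on `N`. -/
def IsSemiregular {N : Type*} [Group N] (H : Subgroup (Equiv.Perm N)) : Prop :=
  ∀ g ∈ H, g ≠ 1 → ∀ x : N, g x ≠ x

/-- A subgroup of `Equiv.Perm N` is regular if its natural action on `N` is
simply transitive. -/
def IsRegularSubgroup {N : Type*} [Group N] (G : Subgroup (Equiv.Perm N)) : Prop :=
  ∀ x y : N, ∃! g : G, (g : Equiv.Perm N) x = y

/-- The cyclic group of order `n` (written multiplicatively). -/
abbrev Cyc (n : ℕ) := Multiplicative (ZMod n)

/-- The group `C_p × C_p` (written multiplicatively). -/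
abbrev Vp (p : ℕ) := Multiplicative (ZMod p × ZMod p)

/-- The action of `C_2` on `C_p × C_p` in which the generator acts by inversion. -/
def actC2 (p : ℕ) : Multiplicative (ZMod 2) →* MulAut (Vp p) where
  toFun c := if Multiplicative.toAdd c = 0 then 1 else MulEquiv.inv (Vp p)
  map_one' := by simp
  map_mul' a b := by
    have h : ∀ x : ZMod 2, x = 0 ∨ x = 1 := by decide
    have hmul : Multiplicative.toAdd (a * b) = Multiplicative.toAdd a + Multiplicative.toAdd b := rfl
    have h11 : (1 : ZMod 2) + 1 = 0 := by decide
    have hinv : (1 : MulAut (Vp p)) = MulEquiv.inv (Vp p) * MulEquiv.inv (Vp p) := by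
      refine MulEquiv.ext fun x => ?_
      show x = (x⁻¹)⁻¹
      simp
    rcases h (Multiplicative.toAdd a) with ha | ha <;> rcases h (Multiplicative.toAdd b) with hb | hb <;>
      simp [hmul, ha, hb, h11, hinv]

/-- The semidirect product `(C_p × C_p) ⋊ C_2`, where the generator of `C_2`
acts by inversion. -/
abbrev GD (p : ℕ) := SemidirectProduct (Vp p) (Multiplicative (ZMod 2)) (actC2 p)

/-!
Every element of `Hol N` is `x ↦ n * α x` with `α ∈ Aut N`. For `N = C_p × D_{2p}` an
automorphism of `p`-power order fixes the centre `C_p` and the rotations pointwise (`Aut C_p` has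
order `p - 1`) and sends reflections to reflections, so it is conjugation by a rotation. Hence
every element of a subgroup of order `p²` of `Hol N` is
`psi (z, i, j) : x ↦ (z, r i) * x * (1, r j)⁻¹`; `psi` is injective on `C_p³`, and `psi (z, i, j)` has a fixed point iff `z = 0` and `i = ± j`.
So a semiregular subgroup is `psi W` with `W` meeting the kernel `{(0, i, -i)}` of
`(z, i, j) ↦ (z, i + j)` trivially: `W` is the image of a section
`(a, b) ↦ (a, βa + γb, b - βa - γb)`, in particular `W ≅ C_p × C_p`, and `W` also avoids
`{(0, i, i)}` iff `2γ ≠ 1`, which leaves `p (p - 1)` pairs `(β, γ)`.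
-/

open Equiv DihedralGroup Multiplicative

section Holomorph

variable {N : Type*} [Group N]

@[simp] lemma leftReg_apply (n x : N) : leftReg N n x = n * x := rfl

lemma apply_mul_of_mem_Hol {g : Perm N} (hg : g ∈ Hol N) (x y : N) :
    g (x * y) = g x * (g 1)⁻¹ * g y := by
  obtain ⟨c, hc⟩ := (Subgroup.mem_normalizer_iff.mp hg (leftReg N x)).mp ⟨x, rfl⟩
  have hconj : ∀ y, g (x * y) = c * g y := fun y => by
    simpa using (DFunLike.congr_fun hc (g y)).symm
  have hc1 : c = g x * (g 1)⁻¹ := by simpa using (congrArg (· * (g 1)⁻¹) (hconj 1)).symm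
  rw [hconj, hc1]

lemma exists_mulAut_of_mem_Hol {g : Perm N} (hg : g ∈ Hol N) :
    ∃ α : MulAut N, ∀ x, g x = g 1 * α x :=
  ⟨{ toEquiv := g.trans (Equiv.mulLeft (g 1)⁻¹)
     map_mul' := fun x y => by simp [apply_mul_of_mem_Hol hg, mul_assoc] },
    fun x => by simp⟩

lemma mulAut_pow_eq_one_of_pow_eq_one {g : Perm N} {n : N} {α : MulAut N}
    (hg : ∀ x, g x = n * α x) {k : ℕ} (hk : g ^ k = 1) : α ^ k = 1 := by
  have hpow : ∀ j : ℕ, ∀ x, (g ^ j) x = (g ^ j) 1 * (α ^ j) x := by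
    intro j
    induction j with
    | zero => simp
    | succ j ih =>
      intro x
      rw [pow_succ, Perm.mul_apply, Perm.mul_apply, ih, ih (g 1), hg, hg 1, map_one α, mul_one,
        map_mul, pow_succ, MulAut.mul_apply, mul_assoc]
  ext x
  simpa [hk] using (hpow k x).symm

variable (N) in
def twoSidedMul : N × N →* Perm N where
  toFun ab := (Equiv.mulLeft ab.1).trans (Equiv.mulRight ab.2⁻¹)
  map_one' := by ext; simp
  map_mul' _ _ := by ext; simp [mul_assoc]

@[simp] lemma twoSidedMul_apply (a b x : N) : twoSidedMul N (a, b) x = a * x * b⁻¹ := rfl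

lemma twoSidedMul_mem_Hol (a b : N) : twoSidedMul N (a, b) ∈ Hol N := by
  have hsplit : twoSidedMul N (a, b) = leftReg N a * twoSidedMul N (1, b) := by
    ext
    simp [mul_assoc]
  have hright : twoSidedMul N (1, b) ∈ Subgroup.centralizer (Set.range (leftReg N)) := by
    rintro _ ⟨n, rfl⟩
    ext
    simp [mul_assoc]
  rw [hsplit]
  exact mul_mem (Subgroup.le_normalizer ⟨a, rfl⟩) (Subgroup.centralizer_le_normalizer _ hright)

end Holomorph

section PrimePowerOrder

variable {G : Type*} [Group G] {p : ℕ} [Fact p.Prime]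

/-- Every endomorphism of `C_p` is `x ↦ x ^ u`, and `u ^ p ^ k = u` in `ZMod p`. -/
lemma mulAut_apply_eq_self_of_range_invariant {α : MulAut G} {k : ℕ} (hα : α ^ p ^ k = 1)
    {f : Multiplicative (ZMod p) →* G} (hf : Function.Injective f)
    (hinv : ∀ x, α (f x) ∈ f.range) (x : Multiplicative (ZMod p)) : α (f x) = f x := by
  choose h hh using hinv
  have hmul : ∀ x y, h (x * y) = h x * h y := fun x y => hf (by simp only [map_mul, hh])
  let H : ZMod p →+ ZMod p :=
    AddMonoidHom.mk' (fun a => toAdd (h (ofAdd a))) (fun a b => by simp [ofAdd_add, hmul])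
  have hH : ∀ a, h (ofAdd a) = ofAdd (H 1 * a) := fun a => by
    rw [mul_comm, ← smul_eq_mul, ← ZMod.map_smul, smul_eq_mul, mul_one]
    rfl
  have hiter : ∀ n a, (α ^ n) (f (ofAdd a)) = f (ofAdd (H 1 ^ n * a)) := by
    intro n
    induction n with
    | zero => simp
    | succ n ih => intro a; rw [pow_succ', MulAut.mul_apply, ih, ← hh, hH, pow_succ', mul_assoc]
  obtain ⟨a, rfl⟩ := ofAdd.surjective x
  rw [← hh, hH]
  simpa [hα, ZMod.pow_card_pow] using (hiter (p ^ k) a).symm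

end PrimePowerOrder

lemma MonoidHom.eq_of_range_eq_of_leftInverse {G H : Type*} [Group G] [Group H] {q : G →* H}
    {s s' : H →* G} (hs : Function.LeftInverse q s) (hs' : Function.LeftInverse q s')
    (h : s.range = s'.range) : s = s' := by
  ext x
  obtain ⟨y, hy⟩ : s x ∈ s'.range := h ▸ ⟨x, rfl⟩
  have hxy : y = x := by rw [← hs' y, hy, hs x]
  rw [← hy, hxy]

lemma card_Vp {p : ℕ} [NeZero p] : Nat.card (Vp p) = p ^ 2 := by
  rw [Nat.card_congr Multiplicative.toAdd, Nat.card_prod, Nat.card_zmod, sq]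

lemma ZMod.two_ne_zero_of_odd {p : ℕ} [Fact p.Prime] (hodd : Odd p) : (2 : ZMod p) ≠ 0 := by
  intro h
  have h2 : p ∣ 2 := (ZMod.natCast_eq_zero_iff 2 p).mp (by exact_mod_cast h)
  have := (Nat.prime_dvd_prime_iff_eq Fact.out Nat.prime_two).mp h2
  subst this
  exact absurd hodd (by decide)

def rotHom (n : ℕ) : Multiplicative (ZMod n) →* DihedralGroup n where
  toFun i := r (toAdd i)
  map_one' := rfl
  map_mul' _ _ := (r_mul_r _ _).symm

@[simp] lemma rotHom_apply (n : ℕ) (i : Multiplicative (ZMod n)) : rotHom n i = r (toAdd i) := rfl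

abbrev CDih (p : ℕ) := Multiplicative (ZMod p) × DihedralGroup p

namespace CDih

variable {p : ℕ}

section Automorphisms

variable [Fact p.Prime]

lemma snd_eq_one_of_mem_center (hodd : Odd p) {x : CDih p} (hx : x ∈ Subgroup.center (CDih p)) :
    x.2 = 1 := by
  have hcenter : x.2 ∈ Subgroup.center (DihedralGroup p) :=
    Subgroup.mem_center_iff.mpr fun d => congrArg Prod.snd (Subgroup.mem_center_iff.mp hx (1, d))
  rwa [DihedralGroup.center_eq_bot_of_odd_ne_one hodd (Fact.out : p.Prime).one_lt.ne',
    Subgroup.mem_bot] at hcenter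

lemma eq_sr_of_mul_self_eq_one (hodd : Odd p) {y : CDih p} (hy : y * y = 1) (hne : y ≠ 1) :
    ∃ k, y = (1, sr k) := by
  obtain ⟨w, d⟩ := y
  have hw : w = 1 := by
    have h := congrArg (toAdd ∘ Prod.fst) hy
    simp only [Function.comp_apply, Prod.fst_mul, toAdd_mul, Prod.fst_one, toAdd_one] at h
    have h2 : (2 : ZMod p) * toAdd w = 0 := by linear_combination h
    simpa using (mul_eq_zero.mp h2).resolve_left (ZMod.two_ne_zero_of_odd hodd)
  subst hw
  cases d with
  | r i =>
    refine absurd ?_ hne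
    have h := congrArg Prod.snd hy
    simp only [Prod.snd_mul, r_mul_r, Prod.snd_one, DihedralGroup.one_def, r.injEq] at h
    have h2 : (2 : ZMod p) * i = 0 := by linear_combination h
    simp [(mul_eq_zero.mp h2).resolve_left (ZMod.two_ne_zero_of_odd hodd)]
  | sr k => exact ⟨k, rfl⟩

variable {k : ℕ} {α : MulAut (CDih p)}

lemma mulAut_apply_mk_one (hodd : Odd p) (hα : α ^ p ^ k = 1) (w : Multiplicative (ZMod p)) :
    α (w, 1) = (w, 1) := by
  refine mulAut_apply_eq_self_of_range_invariant hα (f := MonoidHom.inl _ _)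
    (fun _ _ h => congrArg Prod.fst h) (fun z => ⟨(α (z, 1)).1, ?_⟩) w
  have hcentral : α (z, 1) ∈ Subgroup.center (CDih p) := by
    refine Subgroup.mem_center_iff.mpr fun y => ?_
    obtain ⟨y, rfl⟩ := α.surjective y
    rw [← map_mul, ← map_mul]
    exact congrArg α (Prod.ext (mul_comm _ _) (by simp))
  exact Prod.ext rfl (snd_eq_one_of_mem_center hodd hcentral).symm

lemma exists_mulAut_apply_one_sr (hodd : Odd p) (α : MulAut (CDih p)) (i : ZMod p) :
    ∃ k, α (1, sr i) = (1, sr k) := by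
  refine eq_sr_of_mul_self_eq_one hodd ?_ ?_
  · rw [← map_mul, ← map_one α]
    simp
  · rw [← map_one α, α.injective.ne_iff]
    intro h
    cases congrArg Prod.snd h

lemma mulAut_apply_one_r (hodd : Odd p) (hα : α ^ p ^ k = 1) (i : ZMod p) :
    α (1, r i) = (1, r i) := by
  refine mulAut_apply_eq_self_of_range_invariant hα (f := (MonoidHom.inr _ _).comp (rotHom p))
    (fun a b h => toAdd.injective (r.inj (congrArg Prod.snd h))) (fun j => ?_) (ofAdd i)
  obtain ⟨k₀, hk₀⟩ := exists_mulAut_apply_one_sr hodd α 0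
  obtain ⟨k, hk⟩ := exists_mulAut_apply_one_sr hodd α (toAdd j)
  have hsplit :
      ((MonoidHom.inr _ _).comp (rotHom p) j : CDih p) = (1, sr 0) * (1, sr (toAdd j)) := by
    simp [sr_mul_sr]
  refine ⟨ofAdd (k - k₀), ?_⟩
  rw [hsplit, map_mul, hk₀, hk]
  simp [sr_mul_sr]

lemma exists_mulAut_eq_conj (hodd : Odd p) (hα : α ^ p ^ k = 1) :
    ∃ m : ZMod p, α = MulAut.conj ((1, r m) : CDih p) := by
  obtain ⟨k₀, hk₀⟩ := exists_mulAut_apply_one_sr hodd α 0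
  have hfix : ∀ w i, α (w, r i) = (w, r i) := fun w i => by
    rw [show ((w, r i) : CDih p) = (w, 1) * (1, r i) by simp, map_mul, mulAut_apply_mk_one hodd hα,
      mulAut_apply_one_r hodd hα]
  -- conjugation by `r m` sends `sr 0` to `sr (-2 * m)`
  refine ⟨-k₀ / 2, MulEquiv.ext fun ⟨w, d⟩ => ?_⟩
  cases d with
  | r i => simp [hfix, r_mul_r, inv_r]
  | sr i =>
    rw [show ((w, sr i) : CDih p) = (w, r (-i)) * (1, sr 0) by simp [r_mul_sr], map_mul, hfix,
      hk₀]
    simp only [MulAut.conj_apply, Prod.mk_mul_mk, Prod.inv_mk, inv_r, r_mul_sr, sr_mul_r, mul_one,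
      one_mul, inv_one, Prod.mk.injEq, sr.injEq, true_and]
    field_simp [ZMod.two_ne_zero_of_odd hodd]
    ring

end Automorphisms

def psi (p : ℕ) : Multiplicative (ZMod p × ZMod p × ZMod p) →* Perm (CDih p) :=
  (twoSidedMul (CDih p)).comp
    { toFun := fun v => ((ofAdd (toAdd v).1, r (toAdd v).2.1), (1, r (toAdd v).2.2))
      map_one' := rfl
      map_mul' := fun _ _ => by ext <;> simp [r_mul_r] }

lemma psi_apply (z i j : ZMod p) (x : CDih p) :
    psi p (ofAdd (z, i, j)) x = (ofAdd z, r i) * x * (1, r j)⁻¹ := rfl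

lemma psi_apply_r_eq_self_iff {z i j : ZMod p} {w : Multiplicative (ZMod p)} {k : ZMod p} :
    psi p (ofAdd (z, i, j)) (w, r k) = (w, r k) ↔ z = 0 ∧ i = j := by
  simp only [psi_apply, Prod.inv_mk, inv_one, inv_r, Prod.mk_mul_mk, mul_one, r_mul_r, Prod.ext_iff,
    mul_eq_right, ofAdd_eq_one, r.injEq]
  exact and_congr_right fun _ => ⟨fun h => by linear_combination h, fun h => by rw [h]; ring⟩

lemma psi_apply_sr_eq_self_iff {z i j : ZMod p} {w : Multiplicative (ZMod p)} {k : ZMod p} :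
    psi p (ofAdd (z, i, j)) (w, sr k) = (w, sr k) ↔ z = 0 ∧ i + j = 0 := by
  simp only [psi_apply, Prod.inv_mk, inv_one, inv_r, Prod.mk_mul_mk, mul_one, r_mul_sr, sr_mul_r,
    Prod.ext_iff, mul_eq_right, ofAdd_eq_one, sr.injEq]
  exact and_congr_right fun _ =>
    ⟨fun h => by linear_combination -h, fun h => by linear_combination -h⟩

lemma exists_psi_apply_eq_self_iff {z i j : ZMod p} :
    (∃ x, psi p (ofAdd (z, i, j)) x = x) ↔ z = 0 ∧ (i = j ∨ i + j = 0) := by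
  constructor
  · rintro ⟨⟨w, d⟩, hx⟩
    cases d with
    | r k => exact (psi_apply_r_eq_self_iff.mp hx).imp_right Or.inl
    | sr k => exact (psi_apply_sr_eq_self_iff.mp hx).imp_right Or.inr
  · rintro ⟨hz, hij | hij⟩
    · exact ⟨(1, r 0), psi_apply_r_eq_self_iff.mpr ⟨hz, hij⟩⟩
    · exact ⟨(1, sr 0), psi_apply_sr_eq_self_iff.mpr ⟨hz, hij⟩⟩

lemma psi_injective [Fact p.Prime] (hodd : Odd p) : Function.Injective (psi p) := by
  refine (injective_iff_map_eq_one _).mpr fun v hv => ?_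
  obtain ⟨⟨z, i, j⟩, rfl⟩ := ofAdd.surjective v
  obtain ⟨hz, hij⟩ := psi_apply_r_eq_self_iff.mp (DFunLike.congr_fun hv ((1, r 0) : CDih p))
  obtain ⟨-, hsum⟩ := psi_apply_sr_eq_self_iff.mp (DFunLike.congr_fun hv ((1, sr 0) : CDih p))
  have hj : j = 0 := by
    have h2 : (2 : ZMod p) * j = 0 := by linear_combination hsum - hij
    exact (mul_eq_zero.mp h2).resolve_left (ZMod.two_ne_zero_of_odd hodd)
  subst hz hij hj
  rfl

lemma psi_mem_Hol (v : Multiplicative (ZMod p × ZMod p × ZMod p)) : psi p v ∈ Hol (CDih p) :=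
  twoSidedMul_mem_Hol _ _

lemma exists_snd_eq_r_of_pow_eq_one {n : ℕ} (hn : Odd n) {y : CDih p} (hy : y ^ n = 1) :
    ∃ k, y.2 = r k := by
  obtain ⟨w, _ | k⟩ := y
  · exact ⟨_, rfl⟩
  · have h2 : 2 ∣ n := by
      rw [← orderOf_sr k]
      exact orderOf_dvd_of_pow_eq_one (congrArg Prod.snd hy)
    have := Nat.odd_iff.mp hn
    omega

lemma mem_range_psi [Fact p.Prime] (hodd : Odd p) {g : Perm (CDih p)} (hg : g ∈ Hol (CDih p))
    (hpow : g ^ p ^ 2 = 1) : g ∈ (psi p).range := by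
  obtain ⟨α, hα⟩ := exists_mulAut_of_mem_Hol hg
  obtain ⟨m, rfl⟩ := exists_mulAut_eq_conj hodd (mulAut_pow_eq_one_of_pow_eq_one hα hpow)
  set b : CDih p := (1, r m)
  set a := g 1 * b
  have hg' : g = twoSidedMul _ (a, b) := by
    refine Equiv.ext fun x => ?_
    rw [hα, MulAut.conj_apply, twoSidedMul_apply]
    simp only [a, mul_assoc]
  have hb : b ^ p ^ 2 = 1 := by
    rw [Prod.pow_mk, one_pow, r_pow, Nat.cast_pow, ZMod.natCast_self, zero_pow two_ne_zero,
      mul_zero, r_zero]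
    rfl
  have ha : a ^ p ^ 2 = 1 := by
    have h := DFunLike.congr_fun hpow 1
    rw [hg', ← map_pow, Prod.pow_mk, hb] at h
    simpa using h
  obtain ⟨k, hk⟩ := exists_snd_eq_r_of_pow_eq_one hodd.pow ha
  refine ⟨ofAdd (toAdd a.1, k, m), ?_⟩
  rw [hg', ← Prod.mk.eta (p := a), hk]
  rfl

def sumProj (p : ℕ) : Multiplicative (ZMod p × ZMod p × ZMod p) →* Vp p where
  toFun v := ofAdd ((toAdd v).1, (toAdd v).2.1 + (toAdd v).2.2)
  map_one' := by simp
  map_mul' v w := by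
    simp only [toAdd_mul, Prod.fst_add, Prod.snd_add, ← ofAdd_add, Prod.mk_add_mk]
    congr 2
    ring

def linSection (β γ : ZMod p) : Vp p →* Multiplicative (ZMod p × ZMod p × ZMod p) where
  toFun x := ofAdd ((toAdd x).1, β * (toAdd x).1 + γ * (toAdd x).2,
    (toAdd x).2 - (β * (toAdd x).1 + γ * (toAdd x).2))
  map_one' := by simp
  map_mul' x y := by
    simp only [toAdd_mul, Prod.fst_add, Prod.snd_add, ← ofAdd_add, Prod.mk_add_mk]
    congr 3 <;> ring

lemma linSection_apply (β γ a b : ZMod p) :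
    linSection β γ (ofAdd (a, b)) = ofAdd (a, β * a + γ * b, b - (β * a + γ * b)) := rfl

lemma sumProj_linSection (β γ : ZMod p) : Function.LeftInverse (sumProj p) (linSection β γ) :=
  fun x => by simp [sumProj, linSection]

lemma exists_eq_linSection {s : Vp p →* Multiplicative (ZMod p × ZMod p × ZMod p)}
    (hs : Function.LeftInverse (sumProj p) s) : ∃ β γ, s = linSection β γ := by
  let f : ZMod p × ZMod p →+ ZMod p :=
    AddMonoidHom.mk' (fun x => (toAdd (s (ofAdd x))).2.1) (fun x y => by simp [ofAdd_add])
  have hf : ∀ x : ZMod p × ZMod p, f x = f (1, 0) * x.1 + f (0, 1) * x.2 := fun x => by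
    conv_lhs => rw [show x = x.1 • (1, 0) + x.2 • (0, 1) by ext <;> simp]
    rw [map_add, ZMod.map_smul, ZMod.map_smul, smul_eq_mul, smul_eq_mul, mul_comm, mul_comm x.2]
  refine ⟨f (1, 0), f (0, 1), MonoidHom.ext fun x => ?_⟩
  obtain ⟨⟨a, b⟩, rfl⟩ := ofAdd.surjective x
  have hproj := congrArg toAdd (hs (ofAdd (a, b)))
  simp only [sumProj, MonoidHom.coe_mk, OneHom.coe_mk, toAdd_ofAdd, Prod.mk.injEq] at hproj
  rw [linSection_apply, ← hf (a, b)]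
  ext
  · exact hproj.1
  · rfl
  · simp only [toAdd_ofAdd, f, AddMonoidHom.mk'_apply]
    linear_combination hproj.2

def sectionSubgroup (β γ : ZMod p) : Subgroup (Perm (CDih p)) :=
  ((psi p).comp (linSection β γ)).range

lemma sectionSubgroup_le_Hol (β γ : ZMod p) : sectionSubgroup β γ ≤ Hol (CDih p) := by
  rintro _ ⟨x, rfl⟩
  exact psi_mem_Hol _

lemma eq_of_sectionSubgroup_eq [Fact p.Prime] (hodd : Odd p) {β γ β' γ' : ZMod p}
    (h : sectionSubgroup β γ = sectionSubgroup β' γ') : β = β' ∧ γ = γ' := by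
  rw [sectionSubgroup, sectionSubgroup, MonoidHom.range_comp, MonoidHom.range_comp] at h
  have hs := MonoidHom.eq_of_range_eq_of_leftInverse (sumProj_linSection β γ)
    (sumProj_linSection β' γ') (Subgroup.map_injective (psi_injective hodd) h)
  have h10 := congrArg (fun v => (toAdd v).2.1) (DFunLike.congr_fun hs (ofAdd (1, 0)))
  have h01 := congrArg (fun v => (toAdd v).2.1) (DFunLike.congr_fun hs (ofAdd (0, 1)))
  simp only [linSection_apply, toAdd_ofAdd] at h10 h01
  exact ⟨by linear_combination h10, by linear_combination h01⟩

noncomputable def equivSectionSubgroup [Fact p.Prime] (hodd : Odd p) (β γ : ZMod p) :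
    Vp p ≃* sectionSubgroup β γ :=
  MonoidHom.ofInjective ((psi_injective hodd).comp (sumProj_linSection β γ).injective)

lemma card_sectionSubgroup [Fact p.Prime] (hodd : Odd p) (β γ : ZMod p) :
    Nat.card (sectionSubgroup β γ) = p ^ 2 := by
  rw [← Nat.card_congr (equivSectionSubgroup hodd β γ).toEquiv, card_Vp]

lemma isSemiregular_sectionSubgroup_iff [Fact p.Prime] (hodd : Odd p) {β γ : ZMod p} :
    IsSemiregular (sectionSubgroup β γ) ↔ 2 * γ ≠ 1 := by
  have hinj := (psi_injective hodd).comp (sumProj_linSection β γ).injective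
  constructor
  · intro hsr h2γ
    obtain ⟨x, hx⟩ : ∃ x, psi p (linSection β γ (ofAdd (0, 1))) x = x := by
      rw [linSection_apply, exists_psi_apply_eq_self_iff]
      exact ⟨rfl, Or.inl (by linear_combination h2γ)⟩
    refine hsr _ ⟨_, rfl⟩ (fun h => ?_) x hx
    have h01 := hinj (h.trans (map_one ((psi p).comp (linSection β γ))).symm)
    simp at h01
  · rintro h2γ _ ⟨x, rfl⟩ hne y hy
    obtain ⟨⟨a, b⟩, rfl⟩ := ofAdd.surjective x
    rw [MonoidHom.comp_apply, linSection_apply] at hy hne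
    obtain ⟨rfl, hij⟩ := exists_psi_apply_eq_self_iff.mp ⟨y, hy⟩
    have hb : b = 0 := by
      rcases hij with hij | hij
      · have h : (2 * γ - 1) * b = 0 := by linear_combination hij
        exact (mul_eq_zero.mp h).resolve_left (sub_ne_zero.mpr h2γ)
      · linear_combination hij
    subst hb
    simp only [mul_zero, add_zero, sub_self] at hne
    exact hne (map_one (psi p))

lemma le_range_psi [Fact p.Prime] (hodd : Odd p) {H : Subgroup (Perm (CDih p))}
    (hH : H ≤ Hol (CDih p)) (hcard : Nat.card H = p ^ 2) : H ≤ (psi p).range := fun g hg => by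
  refine mem_range_psi hodd (hH hg) ?_
  simpa [hcard] using congrArg Subtype.val (pow_card_eq_one' (x := (⟨g, hg⟩ : H)))

lemma injective_sumProj_of_isSemiregular [Fact p.Prime] (hodd : Odd p)
    {W : Subgroup (Multiplicative (ZMod p × ZMod p × ZMod p))}
    (hsr : IsSemiregular (W.map (psi p))) :
    Function.Injective ((sumProj p).comp W.subtype) := by
  refine (injective_iff_map_eq_one _).mpr fun ⟨v, hv⟩ hv1 => Subtype.ext ?_
  obtain ⟨⟨z, i, j⟩, rfl⟩ := ofAdd.surjective v
  have hsum := congrArg toAdd hv1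
  simp only [MonoidHom.comp_apply, Subgroup.coe_subtype, sumProj, MonoidHom.coe_mk, OneHom.coe_mk,
    toAdd_ofAdd, toAdd_one, Prod.mk_eq_zero] at hsum
  by_contra hne
  exact hsr _ ⟨_, hv, rfl⟩ (fun h => hne (psi_injective hodd (h.trans (map_one _).symm)))
    (1, sr 0) (psi_apply_sr_eq_self_iff.mpr hsum)

lemma exists_eq_sectionSubgroup [Fact p.Prime] (hodd : Odd p) {H : Subgroup (Perm (CDih p))}
    (hH : H ≤ Hol (CDih p)) (hsr : IsSemiregular H) (hcard : Nat.card H = p ^ 2) :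
    ∃ β γ, H = sectionSubgroup β γ := by
  set W := H.comap (psi p)
  have hW : W.map (psi p) = H := Subgroup.map_comap_eq_self (le_range_psi hodd hH hcard)
  have hcardW : Nat.card W = p ^ 2 := by
    rw [← hcard, ← hW]
    exact Nat.card_congr (W.equivMapOfInjective _ (psi_injective hodd)).toEquiv
  have hbij : Function.Bijective ((sumProj p).comp W.subtype) :=
    (Nat.bijective_iff_injective_and_card _).mpr
      ⟨injective_sumProj_of_isSemiregular hodd (hW ▸ hsr), by rw [hcardW, card_Vp]⟩
  let e := MulEquiv.ofBijective _ hbij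
  obtain ⟨β, γ, hs⟩ := exists_eq_linSection (s := W.subtype.comp e.symm.toMonoidHom)
    (fun x => e.apply_symm_apply x)
  refine ⟨β, γ, ?_⟩
  rw [sectionSubgroup, MonoidHom.range_comp, ← hs, MonoidHom.range_comp,
    MonoidHom.range_eq_top.mpr e.symm.surjective, ← MonoidHom.range_eq_map, W.range_subtype, hW]

lemma card_prod_subtype_two_mul_ne_one [Fact p.Prime] (hodd : Odd p) :
    Nat.card (ZMod p × {γ : ZMod p // 2 * γ ≠ 1}) = p ^ 2 - p := by
  have hγ : ∀ γ : ZMod p, 2 * γ ≠ 1 ↔ γ ≠ 2⁻¹ := fun γ => by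
    rw [Ne, Ne, ← mul_eq_one_iff_eq_inv₀ (ZMod.two_ne_zero_of_odd hodd), mul_comm]
  rw [Nat.card_prod, Nat.card_congr (Equiv.subtypeEquivRight hγ)]
  simp [Nat.mul_sub_one, sq]

end CDih

/-- `Hol(C_p × D_{2p})` has exactly `p² - p` semiregular subgroups of order `p²`,
and each of them is isomorphic to `C_p × C_p`. -/
theorem statement7 (p : ℕ) (hp : p.Prime) (hodd : Odd p) :
    Nat.card {H : Subgroup (Equiv.Perm (Multiplicative (ZMod p) × DihedralGroup p)) //
        H ≤ Hol (Multiplicative (ZMod p) × DihedralGroup p) ∧ IsSemiregular H ∧ Nat.card H = p ^ 2} = p ^ 2 - p ∧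
    ∀ H : Subgroup (Equiv.Perm (Multiplicative (ZMod p) × DihedralGroup p)),
      H ≤ Hol (Multiplicative (ZMod p) × DihedralGroup p) → IsSemiregular H → Nat.card H = p ^ 2 →
      Nonempty (H ≃* Vp p) := by
  have := Fact.mk hp
  open CDih in
  refine ⟨?_, fun H hH hsr hcard => ?_⟩
  · let Φ : ZMod p × {γ : ZMod p // 2 * γ ≠ 1} → {H : Subgroup (Perm (CDih p)) //
        H ≤ Hol (CDih p) ∧ IsSemiregular H ∧ Nat.card H = p ^ 2} := fun x =>
      ⟨sectionSubgroup x.1 x.2, sectionSubgroup_le_Hol _ _,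
        (isSemiregular_sectionSubgroup_iff hodd).mpr x.2.2, card_sectionSubgroup hodd _ _⟩
    have hΦ : Function.Bijective Φ := by
      refine ⟨fun x y h => ?_, fun ⟨H, hH, hsr, hcard⟩ => ?_⟩
      · obtain ⟨h1, h2⟩ := eq_of_sectionSubgroup_eq hodd (congrArg Subtype.val h)
        exact Prod.ext h1 (Subtype.ext h2)
      · obtain ⟨β, γ, rfl⟩ := exists_eq_sectionSubgroup hodd hH hsr hcard
        exact ⟨(β, ⟨γ, (isSemiregular_sectionSubgroup_iff hodd).mp hsr⟩), rfl⟩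
    rw [← Nat.card_congr (Equiv.ofBijective Φ hΦ), card_prod_subtype_two_mul_ne_one hodd]
  · obtain ⟨β, γ, rfl⟩ := exists_eq_sectionSubgroup hodd hH hsr hcard
    exact ⟨(equivSectionSubgroup hodd β γ).symm⟩
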